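/- Let (W_1,…,W_n) and (W_1',…,W_n') be the weighted left creation operators associated with positive regular free holomorphic functions f and f' respectively. There exists a unitary operator U on F²(H_n) with U W_i = W_i' U for i = 1,…,n if and only if f = f' (i.e., a_α = a_α' for all α). -/

import Mathlib

open Filter Topology
open scoped ComplexConjugate ENNReal

namespace NCDomain

/-- Words in the free monoid `F_n^+` on `n` generators. -/
abbrev Word (n : ℕ) := FreeMonoid (Fin n)

instance {n : ℕ} : DecidableEq (Word n) :=
  inferInstanceAs (DecidableEq (List (Fin n)))

/-- The length `|α|` of a word. -/
def wordLen {n : ℕ} (α : Word n) : ℕ := FreeMonoid.length α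

/-- The coefficients `b_α`, defined by `b_{g_0} = 1` and, for `|α| ≥ 1`,
`b_α = Σ_{j=1}^{|α|} Σ_{γ_1⋯γ_j = α, |γ_i| ≥ 1} a_{γ_1}⋯a_{γ_j}`, the sum running over
all ordered factorizations of `α` into nonempty words. -/
noncomputable def bCoeff {n : ℕ} (a : Word n → ℝ) (α : Word n) : ℝ :=
  if α = 1 then 1
  else ∑' L : {L : List (Word n) // L.prod = α ∧ ∀ w ∈ L, w ≠ 1}, (L.1.map a).prod

/-- `f = Σ_{|α|≥1} a_α X_α` is a positive regular free holomorphic function: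
`a_{g_0} = 0`, `a_α ≥ 0`, `a_{g_i} > 0`, and
`limsup_{k→∞} (Σ_{|α|=k} |a_α|²)^{1/(2k)} < ∞`. -/
def PosRegular {n : ℕ} (a : Word n → ℝ) : Prop :=
  a 1 = 0 ∧ (∀ α, 0 ≤ a α) ∧ (∀ i : Fin n, 0 < a (FreeMonoid.of i)) ∧
    ∃ C : ℝ, ∀ᶠ k in atTop,
      (∑' α : {β : Word n // wordLen β = k}, (a α.1) ^ 2) ≤ C ^ (2 * k)

/-- For a tuple `T` of operators and a word `α = g_{i_1}⋯g_{i_k}`,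
the product `T_α = T_{i_1}⋯T_{i_k}` (and `T_{g_0} = I`). -/
noncomputable def opWord {n : ℕ} {H : Type*} [NormedAddCommGroup H] [NormedSpace ℂ H]
    (T : Fin n → H →L[ℂ] H) (α : Word n) : H →L[ℂ] H :=
  ((FreeMonoid.toList α).map T).prod

/-- The full Fock space `F²(H_n)`, realized as `ℓ²` over the free monoid. -/
abbrev Fock (n : ℕ) : Type := lp (fun _ : Word n => ℂ) 2

/-- The canonical orthonormal basis vector `e_α` of the Fock space. -/
noncomputable def fockBasis {n : ℕ} (α : Word n) : Fock n := lp.single 2 α (1 : ℂ)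

/-- `W` is the tuple of weighted left creation operators associated with `f = Σ a_α X_α`:
`W_i e_α = √(b_α / b_{g_i α}) e_{g_i α}`. -/
def IsWeightedShift {n : ℕ} (a : Word n → ℝ) (W : Fin n → Fock n →L[ℂ] Fock n) : Prop :=
  ∀ (i : Fin n) (α : Word n),
    W i (fockBasis α) =
      (Real.sqrt (bCoeff a α / bCoeff a (FreeMonoid.of i * α)) : ℂ) •
        fockBasis (FreeMonoid.of i * α)

/-! ### Auxiliary lemmas -/

section Aux

variable {n : ℕ}

lemma wordLen_prod (L : List (Word n)) : wordLen L.prod = (L.map wordLen).sum := by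
  induction L with
  | nil => rfl
  | cons h t ih =>
      simp only [List.prod_cons, List.map_cons, List.sum_cons, ← ih]
      exact FreeMonoid.length_mul h t.prod

lemma wordLen_eq_zero {α : Word n} : wordLen α = 0 ↔ α = 1 := FreeMonoid.length_eq_zero

/-- Lists of lists are determined by their flattening and the lengths of pieces. -/
lemma flatten_lengths_inj {β : Type*} :
    ∀ (L1 L2 : List (List β)), L1.flatten = L2.flatten →
      L1.map List.length = L2.map List.length → L1 = L2 := by
  intro L1
  induction L1 with
  | nil =>
      intro L2 _ hl
      cases L2 with
      | nil => rfl
      | cons b t => simp at hl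
  | cons a t ih =>
      intro L2 h hl
      cases L2 with
      | nil => simp at hl
      | cons b t2 =>
          simp only [List.flatten_cons] at h
          simp only [List.map_cons, List.cons.injEq] at hl
          obtain ⟨hab, htt⟩ := List.append_inj h hl.1
          subst hab
          rw [ih t2 htt hl.2]

lemma factor_list_inj {α : Word n} {L1 L2 : List (Word n)} (h1 : L1.prod = α)
    (h2 : L2.prod = α) (hlen : L1.map wordLen = L2.map wordLen) : L1 = L2 := by
  have hfl : (L1.map FreeMonoid.toList).flatten = (L2.map FreeMonoid.toList).flatten := by
    rw [← FreeMonoid.toList_prod, ← FreeMonoid.toList_prod, h1, h2]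
  have hlen' : (L1.map FreeMonoid.toList).map List.length
      = (L2.map FreeMonoid.toList).map List.length := by
    rw [List.map_map, List.map_map]
    exact hlen
  have := flatten_lengths_inj _ _ hfl hlen'
  exact List.map_injective_iff.2 FreeMonoid.toList.injective this

lemma length_le_sum : ∀ (l : List ℕ), (∀ x ∈ l, 1 ≤ x) → l.length ≤ l.sum := by
  intro l
  induction l with
  | nil => simp
  | cons x t ih =>
      intro h
      simp only [List.length_cons, List.sum_cons]
      have h1 := h x List.mem_cons_self
      have h2 := ih fun y hy => h y (List.mem_cons_of_mem _ hy)
      omega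

lemma wordLen_le_of_mem {α : Word n} {L : List (Word n)} (hL : L.prod = α) {w : Word n}
    (hw : w ∈ L) : wordLen w ≤ wordLen α := by
  have := List.single_le_sum (l := L.map wordLen) (fun x _ => Nat.zero_le x)
    (wordLen w) (List.mem_map_of_mem (f := wordLen) hw)
  rw [← wordLen_prod, hL] at this
  exact this

instance factFinite (α : Word n) :
    Finite {L : List (Word n) // L.prod = α ∧ ∀ w ∈ L, w ≠ 1} := by
  set N := wordLen α with hN
  have hfin : Finite {l : List (Fin (N + 1)) // l.length ≤ N} := by
    have := List.finite_length_le (Fin (N + 1)) N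
    exact this.to_subtype
  refine Finite.of_injective
    (fun L => (⟨L.1.map (fun w => (⟨min (wordLen w) N, by omega⟩ : Fin (N + 1))), ?_⟩ :
      {l : List (Fin (N + 1)) // l.length ≤ N})) ?_
  · -- length bound
    obtain ⟨L, hprod, hne⟩ := L
    simp only [List.length_map]
    have h1 : ∀ x ∈ L.map wordLen, 1 ≤ x := by
      intro x hx
      obtain ⟨w, hw, rfl⟩ := List.mem_map.1 hx
      have : w ≠ 1 := hne w hw
      have : wordLen w ≠ 0 := fun h => this (wordLen_eq_zero.1 h)
      omega
    have := length_le_sum (L.map wordLen) h1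
    rw [← wordLen_prod, hprod] at this
    simpa using this
  · rintro ⟨L1, h1, hne1⟩ ⟨L2, h2, hne2⟩ h
    simp only [Subtype.mk.injEq] at h ⊢
    have hmin : ∀ (L : List (Word n)), L.prod = α →
        L.map (fun w => min (wordLen w) N) = L.map wordLen := by
      intro L hL
      refine List.map_congr_left fun w hw => ?_
      have := wordLen_le_of_mem hL hw
      omega
    have hval : L1.map (fun w => min (wordLen w) N) = L2.map (fun w => min (wordLen w) N) := by
      have := congrArg (List.map (Fin.val)) h
      simpa [List.map_map, Function.comp_def] using this
    rw [hmin L1 h1, hmin L2 h2] at hval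
    exact factor_list_inj h1 h2 hval

lemma prod_map_of (l : List (Fin n)) :
    ((l.map FreeMonoid.of).prod : Word n) = FreeMonoid.ofList l := by
  induction l with
  | nil => rfl
  | cons x t ih => simp [FreeMonoid.ofList_cons, ih]

lemma bCoeff_one (a : Word n → ℝ) : bCoeff a 1 = 1 := by simp [bCoeff]

lemma bCoeff_pos {a : Word n → ℝ} (ha0 : ∀ α, 0 ≤ a α)
    (hai : ∀ i : Fin n, 0 < a (FreeMonoid.of i)) (α : Word n) : 0 < bCoeff a α := by
  by_cases hα : α = 1
  · simp [hα, bCoeff_one]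
  · rw [bCoeff, if_neg hα]
    haveI := Fintype.ofFinite {L : List (Word n) // L.prod = α ∧ ∀ w ∈ L, w ≠ 1}
    have hL0 : (((FreeMonoid.toList α).map FreeMonoid.of).prod : Word n) = α := by
      rw [prod_map_of, FreeMonoid.ofList_toList]
    refine Summable.tsum_pos (Summable.of_finite) (fun L => List.prod_nonneg ?_)
      ⟨(FreeMonoid.toList α).map FreeMonoid.of, hL0, ?_⟩ ?_
    · intro x hx
      obtain ⟨w, _, rfl⟩ := List.mem_map.1 hx
      exact ha0 w
    · intro w hw
      obtain ⟨x, _, rfl⟩ := List.mem_map.1 hw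
      exact FreeMonoid.of_ne_one x
    · refine List.prod_pos fun x hx => ?_
      rw [List.map_map] at hx
      obtain ⟨i, _, rfl⟩ := List.mem_map.1 hx
      exact hai i

/-- All entries of a factorization different from `[α]` are strictly shorter than `α`. -/
lemma wordLen_lt_of_factor {α : Word n} {L : List (Word n)} (hprod : L.prod = α)
    (hne : ∀ w ∈ L, w ≠ 1) (hL : L ≠ [α]) {w : Word n} (hw : w ∈ L) :
    wordLen w < wordLen α := by
  obtain ⟨s, t, rfl⟩ := List.append_of_mem hw
  have hsum : (s.map wordLen).sum + wordLen w + (t.map wordLen).sum = wordLen α := by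
    have := wordLen_prod (s ++ w :: t)
    rw [hprod] at this
    simp only [List.map_append, List.sum_append, List.map_cons, List.sum_cons] at this
    omega
  have hge1 : ∀ u ∈ s ++ t, 1 ≤ wordLen u := by
    intro u hu
    have : u ≠ 1 := by
      rcases List.mem_append.1 hu with h | h
      · exact hne u (List.mem_append.2 (Or.inl h))
      · exact hne u (List.mem_append.2 (Or.inr (List.mem_cons_of_mem _ h)))
    have : wordLen u ≠ 0 := fun h0 => this (wordLen_eq_zero.1 h0)
    omega
  rcases s with _ | ⟨u, s'⟩
  · rcases t with _ | ⟨v, t'⟩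
    · simp only [List.nil_append, List.prod_cons, List.prod_nil, mul_one] at hprod
      exact absurd (by rw [hprod]; rfl) hL
    · have := hge1 v (by simp)
      simp only [List.map_cons, List.sum_cons, List.map_nil, List.sum_nil] at hsum
      omega
  · have := hge1 u (by simp)
    simp only [List.map_cons, List.sum_cons] at hsum
    omega

/-- The coefficients `a` can be recovered from the coefficients `b`. -/
lemma a_eq_of_b_eq {a a' : Word n → ℝ} (h1 : a 1 = 0) (h1' : a' 1 = 0)
    (hb : ∀ α, bCoeff a α = bCoeff a' α) : a = a' := by
  have key : ∀ N (α : Word n), wordLen α ≤ N → a α = a' α := by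
    intro N
    induction N with
    | zero =>
        intro α hα
        have : α = 1 := wordLen_eq_zero.1 (Nat.le_zero.1 hα)
        rw [this, h1, h1']
    | succ N ih =>
        intro α hα
        by_cases hone : α = 1
        · rw [hone, h1, h1']
        · have hb' := hb α
          haveI := Fintype.ofFinite {L : List (Word n) // L.prod = α ∧ ∀ w ∈ L, w ≠ 1}
          rw [bCoeff, if_neg hone, tsum_fintype, bCoeff, if_neg hone, tsum_fintype] at hb'
          set x0 : {L : List (Word n) // L.prod = α ∧ ∀ w ∈ L, w ≠ 1} :=
            ⟨[α], by simp, by simpa using hone⟩ with hx0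
          rw [← Finset.add_sum_erase _ _ (Finset.mem_univ x0),
            ← Finset.add_sum_erase _ _ (Finset.mem_univ x0)] at hb'
          have hrest : ∑ L ∈ Finset.univ.erase x0, ((L : {L : List (Word n) //
                L.prod = α ∧ ∀ w ∈ L, w ≠ 1}).1.map a).prod
              = ∑ L ∈ Finset.univ.erase x0, ((L : {L : List (Word n) //
                L.prod = α ∧ ∀ w ∈ L, w ≠ 1}).1.map a').prod := by
            refine Finset.sum_congr rfl fun L hL => ?_
            have hLne : L ≠ x0 := Finset.ne_of_mem_erase hL
            have hLne' : L.1 ≠ [α] := fun h => hLne (Subtype.ext h)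
            refine congrArg List.prod (List.map_congr_left fun w hw => ?_)
            have hlt := wordLen_lt_of_factor L.2.1 L.2.2 hLne' hw
            exact ih w (by omega)
          rw [hrest] at hb'
          have : (List.map a [α]).prod = (List.map a' [α]).prod := by
            exact add_right_cancel hb'
          simpa using this
  funext α
  exact key (wordLen α) α le_rfl

/-! ### Fock space lemmas -/

/-- The canonical Hilbert basis of the Fock space. -/
noncomputable def fockHB : HilbertBasis (Word n) ℂ (Fock n) :=
  HilbertBasis.ofRepr (LinearIsometryEquiv.refl ℂ (Fock n))

lemma fockHB_apply (α : Word n) : (fockHB : HilbertBasis (Word n) ℂ (Fock n)) α = fockBasis α := by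
  rw [← HilbertBasis.repr_symm_single]
  show (LinearIsometryEquiv.refl ℂ (Fock n)).symm (lp.single 2 α 1) = fockBasis α
  rfl

lemma dense_span_fockBasis :
    Dense ((Submodule.span ℂ (Set.range (@fockBasis n)) : Submodule ℂ (Fock n)) : Set (Fock n)) := by
  have h := (fockHB : HilbertBasis (Word n) ℂ (Fock n)).dense_span
  have hco : ⇑(fockHB : HilbertBasis (Word n) ℂ (Fock n)) = @fockBasis n := funext fockHB_apply
  rw [hco] at h
  exact Submodule.dense_iff_topologicalClosure_eq_top.2 h

lemma clm_ext_fock {F : Type*} [NormedAddCommGroup F] [NormedSpace ℂ F]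
    {T S : Fock n →L[ℂ] F} (h : ∀ α, T (fockBasis α) = S (fockBasis α)) : T = S := by
  refine ContinuousLinearMap.ext_on dense_span_fockBasis ?_
  rintro x ⟨α, rfl⟩
  exact h α

lemma norm_fockBasis (α : Word n) : ‖(fockBasis α : Fock n)‖ = 1 := by
  have := lp.norm_single (p := 2) (E := fun _ : Word n => ℂ) (by norm_num)
    α (1 : ℂ)
  simpa [fockBasis] using this

lemma fockBasis_apply_self (α : Word n) : (fockBasis α : Fock n) α = 1 := by
  simpa [fockBasis] using lp.single_apply_self (E := fun _ : Word n => ℂ) 2 α (1 : ℂ)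

lemma fockBasis_apply_ne {α β : Word n} (h : β ≠ α) : (fockBasis α : Fock n) β = 0 := by
  simpa [fockBasis] using lp.single_apply_ne (E := fun _ : Word n => ℂ) 2 α (1 : ℂ) h

lemma inner_fockBasis_left (β : Word n) (f : Fock n) :
    (inner ℂ (fockBasis β) f : ℂ) = f β := by
  have := lp.inner_single_left (𝕜 := ℂ) (G := fun _ : Word n => ℂ) β (1 : ℂ) f
  simpa [fockBasis] using this

variable {a : Word n → ℝ} {W : Fin n → Fock n →L[ℂ] Fock n}

lemma one_ne_mul (i : Fin n) (α : Word n) : (1 : Word n) ≠ FreeMonoid.of i * α := by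
  intro h
  have := congrArg FreeMonoid.length h
  rw [FreeMonoid.length_mul, FreeMonoid.length_of, FreeMonoid.length_one] at this
  omega

lemma inner_one_W (hW : IsWeightedShift a W) (i : Fin n) (x : Fock n) :
    (inner ℂ (fockBasis (1 : Word n)) (W i x) : ℂ) = 0 := by
  have hcl : (innerSL ℂ (fockBasis (1 : Word n))).comp (W i) = 0 := by
    refine clm_ext_fock fun α => ?_
    simp only [ContinuousLinearMap.comp_apply, ContinuousLinearMap.zero_apply, innerSL_apply_apply]
    rw [hW i α, inner_smul_right, inner_fockBasis_left,
      fockBasis_apply_ne (one_ne_mul i α)]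
    simp
  have := congrFun (congrArg (fun (T : Fock n →L[ℂ] ℂ) => (T : Fock n → ℂ)) hcl) x
  simpa using this

end Aux

/-- the weighted left creation operators associated with `f` and `f'` are
unitarily equivalent (via a unitary intertwining `U W_i = W_i' U`) if and only if
`f = f'`. -/
theorem weightedShift_unitarily_equiv_iff {n : ℕ} (a a' : Word n → ℝ)
    (hreg : PosRegular a) (hreg' : PosRegular a')
    (W W' : Fin n → Fock n →L[ℂ] Fock n)
    (hW : IsWeightedShift a W) (hW' : IsWeightedShift a' W') :
    (∃ U : Fock n ≃ₗᵢ[ℂ] Fock n,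
        ∀ (i : Fin n) (x : Fock n), U (W i x) = W' i (U x)) ↔ a = a' := by
  obtain ⟨ha1, ha0, hai, -⟩ := hreg
  obtain ⟨ha1', ha0', hai', -⟩ := hreg'
  have hbpos : ∀ α, 0 < bCoeff a α := bCoeff_pos ha0 hai
  have hbpos' : ∀ α, 0 < bCoeff a' α := bCoeff_pos ha0' hai'
  constructor
  · rintro ⟨U, hU⟩
    -- Step 0 : `U` fixes the vacuum up to a unimodular scalar.
    have hvac : ∃ c : ℂ, ‖c‖ = 1 ∧ U (fockBasis 1) = c • fockBasis 1 := by
      set y := U (fockBasis (1 : Word n)) with hy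
      have hcoord : ∀ β : Word n, β ≠ 1 → (y : ∀ _ : Word n, ℂ) β = 0 := by
        intro β hβ
        obtain ⟨i, t, hit⟩ : ∃ i t, FreeMonoid.toList β = i :: t := by
          rcases h : FreeMonoid.toList β with _ | ⟨i, t⟩
          · exact absurd (FreeMonoid.toList.injective (by simpa using h)) hβ
          · exact ⟨i, t, rfl⟩
        set γ : Word n := FreeMonoid.ofList t with hγ
        have hβeq : β = FreeMonoid.of i * γ := by
          apply FreeMonoid.toList.injective
          simp [hit, hγ]
        set r' : ℝ := Real.sqrt (bCoeff a' γ / bCoeff a' β) with hr'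
        have hr'pos : 0 < r' :=
          Real.sqrt_pos.2 (div_pos (hbpos' γ) (hbpos' _))
        have hWγ : W' i (fockBasis γ) = (r' : ℂ) • fockBasis β := by
          rw [hW' i γ, ← hβeq, hr']
        have hb : fockBasis β = ((r' : ℂ)⁻¹) • W' i (fockBasis γ) := by
          rw [hWγ, smul_smul, inv_mul_cancel₀ (by exact_mod_cast hr'pos.ne'), one_smul]
        have : (y : ∀ _ : Word n, ℂ) β = inner ℂ (fockBasis β) y := (inner_fockBasis_left β y).symm
        rw [this, hb]
        have hWU : W' i (fockBasis γ) = U (W i (U.symm (fockBasis γ))) := by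
          rw [hU i (U.symm (fockBasis γ)), U.apply_symm_apply]
        rw [hWU, inner_smul_left, hy, U.inner_map_map]
        have : (inner ℂ (W i (U.symm (fockBasis γ))) (fockBasis (1 : Word n)) : ℂ) = 0 := by
          rw [← inner_conj_symm, inner_one_W hW]
          simp
        rw [this, mul_zero]
      set c : ℂ := (y : ∀ _ : Word n, ℂ) 1 with hc
      have hyc : y = c • fockBasis 1 := by
        apply lp.ext
        funext β
        by_cases hβ : β = 1
        · subst hβ
          simp [lp.coeFn_smul, fockBasis_apply_self, hc]
        · rw [hcoord β hβ]
          simp [lp.coeFn_smul, fockBasis_apply_ne (by simpa using hβ : β ≠ (1 : Word n))]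
      refine ⟨c, ?_, hyc⟩
      have h1 : ‖y‖ = 1 := by rw [hy, U.norm_map, norm_fockBasis]
      rw [hyc, norm_smul, norm_fockBasis, mul_one] at h1
      exact h1
    -- Step 1 : induction along words.
    have key : ∀ α : Word n, bCoeff a α = bCoeff a' α ∧
        ∃ c : ℂ, ‖c‖ = 1 ∧ U (fockBasis α) = c • fockBasis α := by
      intro α
      induction α using FreeMonoid.inductionOn' with
      | one => exact ⟨by rw [bCoeff_one, bCoeff_one], hvac⟩
      | of_mul i γ ih =>
          obtain ⟨hbγ, c, hc1, hcU⟩ := ih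
          set r : ℝ := Real.sqrt (bCoeff a γ / bCoeff a (FreeMonoid.of i * γ)) with hrdef
          set r' : ℝ := Real.sqrt (bCoeff a' γ / bCoeff a' (FreeMonoid.of i * γ)) with hr'def
          have hrpos : 0 < r := Real.sqrt_pos.2 (div_pos (hbpos γ) (hbpos _))
          have hr'pos : 0 < r' := Real.sqrt_pos.2 (div_pos (hbpos' γ) (hbpos' _))
          have heq : (r : ℂ) • U (fockBasis (FreeMonoid.of i * γ))
              = (c * (r' : ℂ)) • fockBasis (FreeMonoid.of i * γ) := by
            have h0 := hU i (fockBasis γ)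
            rw [hW i γ, hcU, map_smul, map_smul, hW' i γ, smul_smul] at h0
            rw [hrdef, hr'def]
            exact h0
          have hUiγ : U (fockBasis (FreeMonoid.of i * γ))
              = ((c * (r' : ℂ)) / (r : ℂ)) • fockBasis (FreeMonoid.of i * γ) := by
            have hrne : (r : ℂ) ≠ 0 := by exact_mod_cast hrpos.ne'
            calc U (fockBasis (FreeMonoid.of i * γ))
                = ((r : ℂ)⁻¹ * (r : ℂ)) • U (fockBasis (FreeMonoid.of i * γ)) := by
                  rw [inv_mul_cancel₀ hrne, one_smul]
              _ = (r : ℂ)⁻¹ • ((r : ℂ) • U (fockBasis (FreeMonoid.of i * γ))) := by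
                  rw [smul_smul]
              _ = (r : ℂ)⁻¹ • ((c * (r' : ℂ)) • fockBasis (FreeMonoid.of i * γ)) := by rw [heq]
              _ = ((c * (r' : ℂ)) / (r : ℂ)) • fockBasis (FreeMonoid.of i * γ) := by
                  rw [smul_smul, div_eq_inv_mul]
          have hnorm : ‖(c * (r' : ℂ)) / (r : ℂ)‖ = 1 := by
            have h1 : ‖U (fockBasis (FreeMonoid.of i * γ))‖ = 1 := by
              rw [U.norm_map, norm_fockBasis]
            rw [hUiγ, norm_smul, norm_fockBasis, mul_one] at h1
            exact h1
          have hrr' : r = r' := by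
            rw [norm_div, norm_mul, hc1, one_mul, Complex.norm_real, Complex.norm_real,
              Real.norm_eq_abs, Real.norm_eq_abs, abs_of_pos hr'pos, abs_of_pos hrpos,
              div_eq_one_iff_eq hrpos.ne'] at hnorm
            exact hnorm.symm
          have hbratio : bCoeff a γ / bCoeff a (FreeMonoid.of i * γ)
              = bCoeff a' γ / bCoeff a' (FreeMonoid.of i * γ) := by
            have := hrr'
            rw [hrdef, hr'def, Real.sqrt_inj (le_of_lt (div_pos (hbpos γ) (hbpos _)))
              (le_of_lt (div_pos (hbpos' γ) (hbpos' _)))] at this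
            exact this
          have hbnew : bCoeff a (FreeMonoid.of i * γ) = bCoeff a' (FreeMonoid.of i * γ) := by
            rw [← hbγ] at hbratio
            have h2 := hbratio
            rw [div_eq_div_iff (hbpos _).ne' (hbpos' _).ne'] at h2
            exact (mul_left_cancel₀ (hbpos γ).ne' h2).symm
          refine ⟨hbnew, (c * (r' : ℂ)) / (r : ℂ), hnorm, hUiγ⟩
    exact a_eq_of_b_eq ha1 ha1' fun α => (key α).1
  · rintro rfl
    refine ⟨LinearIsometryEquiv.refl ℂ (Fock n), fun i x => ?_⟩
    have : W i = W' i := clm_ext_fock fun α => by rw [hW i α, hW' i α]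
    simp [this]

end NCDomain
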